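/- arXiv:1512.06665 — 3 statements merged into one kernel-verified Lean document; each statement's English description precedes it below -/
import Mathlib

section
/- For all integers l ≥ 1 and all θ ∈ [0, π/2], one has 0 ≤ 1 - P_l(cos(θ/l)) ≤ C θ² for some constant C independent of l and θ, where P_l is the l-th Legendre polynomial. -/
/-!
Put `x = 1 - 2s`. Writing `(x² - 1)ˡ = (x - 1)ˡ (x + 1)ˡ` and applying Leibniz's rule to the
Rodrigues formula gives `P_l(1 - 2s) = ∑ₖ (-1)ᵏ C(l,k)² sᵏ (1 - s)^(l-k)`. For `x = cos(θ/l)`,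
`s = sin²(θ/2l)` and `u := l²s ≤ θ²/4 < 3/4`. Since `C(l,k)² sᵏ ≤ uᵏ/(k!)²`, the terms with
`k ≥ 2` contribute at most `u²/3`, while Bernoulli's inequality controls the first two terms
`(1 - s)ˡ - u (1 - s)^(l-1)`; together this gives `0 ≤ 1 - P_l(1 - 2s) ≤ 3u ≤ θ²`.
-/

open Real

/-- The l-th Legendre polynomial via the Rodrigues formula
`P_l(x) = (1/(2^l l!)) dˡ/dxˡ (x²-1)ˡ`. -/
noncomputable def legendreP (l : ℕ) (x : ℝ) : ℝ :=
  (1 / (2 ^ l * (l.factorial : ℝ))) * iteratedDeriv l (fun y : ℝ => (y ^ 2 - 1) ^ l) x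

open Polynomial Finset

theorem Polynomial.iteratedDeriv_eval {𝕜 : Type*} [NontriviallyNormedField 𝕜] (p : 𝕜[X]) (n : ℕ) :
    iteratedDeriv n (fun x => p.eval x) = fun x => (derivative^[n] p).eval x := by
  induction n generalizing p with
  | zero => simp
  | succ n ih =>
    have hderiv : (_root_.deriv fun x => p.eval x) = fun x => (derivative p).eval x := by
      ext x
      exact p.deriv
    rw [iteratedDeriv_succ', hderiv, ih, Function.iterate_succ_apply]

theorem legendreP_eq_sum (l : ℕ) (x : ℝ) :
    legendreP l x = ∑ k ∈ range (l + 1),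
      (l.choose k : ℝ) ^ 2 * ((x - 1) / 2) ^ k * ((x + 1) / 2) ^ (l - k) := by
  have hpoly : (fun y : ℝ => (y ^ 2 - 1) ^ l)
      = fun y => ((X - C 1) ^ l * (X - C (-1)) ^ l : ℝ[X]).eval y := by
    funext y
    simp only [eval_mul, eval_pow, eval_sub, eval_X, eval_C, ← mul_pow]
    ring
  simp only [legendreP, hpoly, iteratedDeriv_eval, iterate_derivative_mul, eval_finsetSum, mul_sum]
  refine sum_congr rfl fun k hk => ?_
  have hkl : k ≤ l := Nat.lt_succ_iff.mp (mem_range.mp hk)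
  have hfac : (l.descFactorial (l - k) * l.descFactorial k : ℝ) = l.factorial * l.choose k := by
    rw [Nat.descFactorial_eq_factorial_mul_choose, Nat.descFactorial_eq_factorial_mul_choose,
      Nat.choose_symm hkl, ← Nat.choose_mul_factorial_mul_factorial hkl]
    push_cast; ring
  have hpow : (2 : ℝ) ^ l = 2 ^ k * 2 ^ (l - k) := by rw [← pow_add, Nat.add_sub_cancel' hkl]
  simp only [iterate_derivative_X_sub_pow, Nat.sub_sub_self hkl, nsmul_eq_mul, eval_mul,
    eval_natCast, eval_pow, eval_sub, eval_X, eval_C, sub_neg_eq_add]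
  rw [hpow, div_pow, div_pow]
  field_simp
  linear_combination (x - 1) ^ k * (x + 1) ^ (l - k) * l.choose k * hfac

theorem legendreP_one_sub_two_mul (l : ℕ) (s : ℝ) :
    legendreP l (1 - 2 * s) =
      ∑ k ∈ range (l + 1), (-1) ^ k * (l.choose k : ℝ) ^ 2 * s ^ k * (1 - s) ^ (l - k) := by
  rw [legendreP_eq_sum]
  refine sum_congr rfl fun k _ => ?_
  rw [show (1 - 2 * s - 1) / 2 = -s by ring, show (1 - 2 * s + 1) / 2 = 1 - s by ring, neg_pow]
  ring

theorem legendreP_succ_one_sub_two_mul (n : ℕ) (s : ℝ) :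
    legendreP (n + 1) (1 - 2 * s) = (1 - s) ^ (n + 1) - (n + 1) ^ 2 * s * (1 - s) ^ n +
      ∑ m ∈ range n, (-1) ^ m * ((n + 1).choose (m + 2) : ℝ) ^ 2 * s ^ (m + 2) *
        (1 - s) ^ (n - (m + 1)) := by
  have htail : ∀ m ∈ range n,
      (-1) ^ (m + 1 + 1) * ((n + 1).choose (m + 1 + 1) : ℝ) ^ 2 * s ^ (m + 1 + 1) *
        (1 - s) ^ (n + 1 - (m + 1 + 1)) =
      (-1) ^ m * ((n + 1).choose (m + 2) : ℝ) ^ 2 * s ^ (m + 2) * (1 - s) ^ (n - (m + 1)) :=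
    fun m _ => by rw [Nat.add_sub_add_right]; ring
  rw [legendreP_one_sub_two_mul, sum_range_succ', sum_range_succ', sum_congr rfl htail]
  simp only [zero_add, Nat.choose_zero_right, Nat.choose_one_right, Nat.sub_zero,
    Nat.add_sub_cancel]
  push_cast
  ring

theorem sum_choose_sq_mul_pow_le (l N : ℕ) {s : ℝ} (hs : 0 ≤ s) (hu : l ^ 2 * s ≤ 1) :
    ∑ m ∈ range N, (l.choose (m + 2) : ℝ) ^ 2 * s ^ (m + 2) ≤ (l ^ 2 * s) ^ 2 / 3 := by
  set u : ℝ := l ^ 2 * s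
  have hu0 : 0 ≤ u := by positivity
  have hterm (m : ℕ) : (l.choose (m + 2) : ℝ) ^ 2 * s ^ (m + 2) ≤ u ^ 2 / 4 * (1 / 9) ^ m := by
    have hfac : (4 * 9 ^ m : ℝ) ≤ ((m + 2).factorial : ℝ) ^ 2 := by
      have h : (2 * 3 ^ m : ℝ) ≤ (m + 2).factorial := by
        rw [add_comm m]
        exact_mod_cast (by simpa using @Nat.factorial_mul_pow_le_factorial 2 m :
          2 * 3 ^ m ≤ (2 + m).factorial)
      calc (4 * 9 ^ m : ℝ) = (2 * 3 ^ m) ^ 2 := by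
            rw [mul_pow, ← pow_mul, mul_comm m, pow_mul]; norm_num
        _ ≤ _ := by gcongr
    calc (l.choose (m + 2) : ℝ) ^ 2 * s ^ (m + 2)
        ≤ ((l : ℝ) ^ (m + 2) / (m + 2).factorial) ^ 2 * s ^ (m + 2) := by
          gcongr; exact Nat.choose_le_pow_div _ _
      _ = u ^ (m + 2) / ((m + 2).factorial : ℝ) ^ 2 := by ring
      _ ≤ u ^ 2 / (4 * 9 ^ m) :=
          div_le_div₀ (by positivity) (pow_le_pow_of_le_one hu0 hu (by omega)) (by positivity) hfac
      _ = u ^ 2 / 4 * (1 / 9) ^ m := by rw [one_div_pow]; ring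
  have hgeom : ∑ m ∈ range N, (1 / 9 : ℝ) ^ m ≤ 9 / 8 := by
    rw [range_eq_Ico]
    refine (geom_sum_Ico_le_of_lt_one (by norm_num) (by norm_num)).trans_eq ?_
    norm_num
  calc ∑ m ∈ range N, (l.choose (m + 2) : ℝ) ^ 2 * s ^ (m + 2)
      ≤ ∑ m ∈ range N, u ^ 2 / 4 * (1 / 9) ^ m := sum_le_sum fun m _ => hterm m
    _ = u ^ 2 / 4 * ∑ m ∈ range N, (1 / 9 : ℝ) ^ m := by rw [mul_sum]
    _ ≤ u ^ 2 / 4 * (9 / 8) := by gcongr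
    _ ≤ u ^ 2 / 3 := by nlinarith [sq_nonneg u]

theorem legendreP_one_sub_two_mul_bounds (l : ℕ) {s : ℝ} (hs : 0 ≤ s) (hu : l ^ 2 * s ≤ 3 / 4) :
    0 ≤ 1 - legendreP l (1 - 2 * s) ∧ 1 - legendreP l (1 - 2 * s) ≤ 3 * (l ^ 2 * s) := by
  rcases l with _ | n
  · simp [legendreP]
  have htail := sum_choose_sq_mul_pow_le (n + 1) n hs (by linarith)
  push_cast at hu htail ⊢
  have hns : (n + 1) * s ≤ (n + 1) ^ 2 * s :=
    mul_le_mul_of_nonneg_right (by nlinarith [n.cast_nonneg (α := ℝ)]) hs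
  have hs1 : s ≤ 1 := by nlinarith [n.cast_nonneg (α := ℝ)]
  rw [legendreP_succ_one_sub_two_mul]
  set u : ℝ := (n + 1) ^ 2 * s
  have hu0 : 0 ≤ u := by positivity
  have hc_pow_le (k : ℕ) : (1 - s) ^ k ≤ 1 := pow_le_one₀ (by linarith) (by linarith)
  have hc_pow_ge (k : ℕ) : 1 - k * s ≤ (1 - s) ^ k := by
    simpa [sub_eq_add_neg] using one_add_mul_le_pow (a := -s) (by linarith) k
  set E := ∑ m ∈ range n, (-1) ^ m * ((n + 1).choose (m + 2) : ℝ) ^ 2 * s ^ (m + 2) *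
    (1 - s) ^ (n - (m + 1))
  have hE : |E| ≤ u ^ 2 / 3 := by
    refine (abs_sum_le_sum_abs _ _).trans (le_trans (sum_le_sum fun m _ => ?_) htail)
    simp only [abs_mul, abs_pow, abs_neg, abs_one, one_pow, one_mul, Nat.abs_cast,
      abs_of_nonneg hs, abs_of_nonneg (sub_nonneg.2 hs1)]
    exact mul_le_of_le_one_right (by positivity) (hc_pow_le _)
  obtain ⟨hE_ge, hE_le⟩ := abs_le.mp hE
  have hu_sq : u * u ≤ 3 / 4 * u := mul_le_mul_of_nonneg_right hu hu0
  have hc_succ := hc_pow_ge (n + 1)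
  push_cast at hc_succ
  constructor
  · have hns' : n * s ≤ u := by linarith
    have hu_mul_ge : u * (1 - n * s) ≤ u * (1 - s) ^ n :=
      mul_le_mul_of_nonneg_left (hc_pow_ge n) hu0
    have hu_mul_ns : u * (n * s) ≤ u * u := mul_le_mul_of_nonneg_left hns' hu0
    linarith [hc_pow_le (n + 1)]
  · linarith [mul_le_of_le_one_right hu0 (hc_pow_le n)]

/-- there is a constant `C > 0` such that for all `l ≥ 1` and
`θ ∈ [0, π/2]`, `0 ≤ 1 - P_l(cos(θ/l)) ≤ C θ²`. -/
theorem stmt_0 :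
    ∃ C > (0 : ℝ), ∀ l : ℕ, 1 ≤ l → ∀ θ ∈ Set.Icc (0 : ℝ) (π / 2),
      0 ≤ 1 - legendreP l (Real.cos (θ / l)) ∧
      1 - legendreP l (Real.cos (θ / l)) ≤ C * θ ^ 2 := by
  refine ⟨1, one_pos, fun l hl θ ⟨hθ0, hθπ⟩ => ?_⟩
  have hl0 : (0 : ℝ) < l := by exact_mod_cast hl
  have hcos : cos (θ / l) = 1 - 2 * sin (θ / l / 2) ^ 2 := by
    rw [← cos_two_mul_eq_one_sub, mul_div_cancel₀ _ two_ne_zero]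
  have hu : (l : ℝ) ^ 2 * sin (θ / l / 2) ^ 2 ≤ θ ^ 2 / 4 :=
    calc (l : ℝ) ^ 2 * sin (θ / l / 2) ^ 2 ≤ l ^ 2 * (θ / l / 2) ^ 2 :=
        mul_le_mul_of_nonneg_left sin_sq_le_sq (sq_nonneg _)
      _ = θ ^ 2 / 4 := by field_simp; ring
  have hθ_sq : θ ^ 2 / 4 ≤ 3 / 4 := by nlinarith [pi_lt_d2]
  obtain ⟨hlower, hupper⟩ := legendreP_one_sub_two_mul_bounds l (sq_nonneg _) (hu.trans hθ_sq)
  rw [hcos]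
  exact ⟨hlower, by linarith⟩
end

section
/- Let s > 0. Then ∫_{log√2}^{log√N} z^{2/s - 1}·(1 - (1 - e^{-2z})^{N/2}) dz is asymptotically equivalent to (s/2)·(log√N)^{2/s} as N → ∞; more precisely, the ratio of the integral to (s/2)(log√N)^{2/s} tends to 1. -/
/-!
Write `b = log √N`, so that `N / 2 = e^{2b} / 2` and the integrand is `z^{q-1}` (with `q = 2/s`)
damped by the factor `1 - (1 - e^{-2z})^{e^{2b}/2} ∈ [0, 1]`. Dropping the factor bounds the
integral over `[a, b]`, `a = log √2`, above by `(b^q - a^q)/q`. Below the cut-off `c = b - log b` the factor is at least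
`1 - e^{-b²/2}`, because `(1 - w)^p ≤ e^{-wp}` and `e^{-2c} e^{2b}/2 = b²/2`; so the integral is at
least `(1 - e^{-b²/2}) (c^q - a^q)/q`. Since `c/b → 1`, both bounds are `∼ b^q/q`.
-/

open Real Filter Topology Set intervalIntegral

lemma one_sub_rpow_le_exp_neg_mul {w p : ℝ} (hw : w ≤ 1) (hp : 0 ≤ p) :
    (1 - w) ^ p ≤ exp (-(w * p)) :=
  calc (1 - w) ^ p ≤ exp (-w) ^ p :=
        rpow_le_rpow (by linarith) (by linarith [add_one_le_exp (-w)]) hp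
    _ = exp (-(w * p)) := by rw [← exp_mul, neg_mul]

section Integrand

variable {p r z c : ℝ}

lemma one_sub_exp_neg_two_mul_nonneg (hz : 0 ≤ z) : 0 ≤ 1 - exp (-2 * z) := by
  linarith [exp_le_one_iff.mpr (show -2 * z ≤ 0 by linarith)]

lemma one_sub_exp_neg_two_mul_rpow_le_one (hz : 0 ≤ z) (hp : 0 ≤ p) :
    (1 - exp (-2 * z)) ^ p ≤ 1 :=
  rpow_le_one (one_sub_exp_neg_two_mul_nonneg hz) (by linarith [exp_pos (-2 * z)]) hp

lemma rpow_mul_one_sub_rpow_nonneg (hz : 0 ≤ z) (hp : 0 ≤ p) :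
    0 ≤ z ^ r * (1 - (1 - exp (-2 * z)) ^ p) :=
  mul_nonneg (rpow_nonneg hz r) (sub_nonneg.mpr (one_sub_exp_neg_two_mul_rpow_le_one hz hp))

lemma rpow_mul_one_sub_rpow_le (hz : 0 ≤ z) :
    z ^ r * (1 - (1 - exp (-2 * z)) ^ p) ≤ z ^ r :=
  mul_le_of_le_one_right (rpow_nonneg hz r)
    (by linarith [rpow_nonneg (one_sub_exp_neg_two_mul_nonneg hz) p])

lemma le_rpow_mul_one_sub_rpow (hz : 0 ≤ z) (hzc : z ≤ c) (hp : 0 ≤ p) :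
    (1 - exp (-(exp (-2 * c) * p))) * z ^ r ≤ z ^ r * (1 - (1 - exp (-2 * z)) ^ p) := by
  have hdamp : (1 - exp (-2 * z)) ^ p ≤ exp (-(exp (-2 * c) * p)) :=
    (rpow_le_rpow (one_sub_exp_neg_two_mul_nonneg hz)
        (by linarith [exp_le_exp.mpr (show -2 * c ≤ -2 * z by linarith)]) hp).trans
      (one_sub_rpow_le_exp_neg_mul (exp_le_one_iff.mpr (by linarith)) hp)
  rw [mul_comm]
  exact mul_le_mul_of_nonneg_left (by linarith) (rpow_nonneg hz r)

lemma intervalIntegrable_rpow_mul_one_sub_rpow (hr : -1 < r) (hp : 0 ≤ p) (a b : ℝ) :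
    IntervalIntegrable (fun z : ℝ => z ^ r * (1 - (1 - exp (-2 * z)) ^ p)) MeasureTheory.volume a b :=
  (intervalIntegral.intervalIntegrable_rpow' hr).mul_continuousOn
    (continuous_const.sub ((continuous_const.sub (continuous_exp.comp
      (continuous_const.mul continuous_id))).rpow_const fun _ => Or.inr hp)).continuousOn

end Integrand

section Integral

variable {a b c p q : ℝ}

lemma integral_rpow_sub_one (hq : 0 < q) (a b : ℝ) :
    ∫ z in a..b, z ^ (q - 1) = (b ^ q - a ^ q) / q := by
  rw [integral_rpow (Or.inl (by linarith)), sub_add_cancel]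

lemma integral_rpow_mul_one_sub_rpow_le (hq : 0 < q) (hp : 0 ≤ p) (ha : 0 ≤ a) (hab : a ≤ b) :
    ∫ z in a..b, z ^ (q - 1) * (1 - (1 - exp (-2 * z)) ^ p) ≤ (b ^ q - a ^ q) / q := by
  rw [← integral_rpow_sub_one hq]
  exact integral_mono_on hab (intervalIntegrable_rpow_mul_one_sub_rpow (by linarith) hp a b)
    (intervalIntegral.intervalIntegrable_rpow' (by linarith))
    fun z hz => rpow_mul_one_sub_rpow_le (ha.trans hz.1)

lemma le_integral_rpow_mul_one_sub_rpow (hq : 0 < q) (hp : 0 ≤ p) (ha : 0 ≤ a) (hac : a ≤ c)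
    (hcb : c ≤ b) :
    (1 - exp (-(exp (-2 * c) * p))) * ((c ^ q - a ^ q) / q) ≤
      ∫ z in a..b, z ^ (q - 1) * (1 - (1 - exp (-2 * z)) ^ p) := by
  have hint := intervalIntegrable_rpow_mul_one_sub_rpow (r := q - 1) (by linarith) hp
  calc (1 - exp (-(exp (-2 * c) * p))) * ((c ^ q - a ^ q) / q)
      = ∫ z in a..c, (1 - exp (-(exp (-2 * c) * p))) * z ^ (q - 1) := by
        rw [integral_const_mul, integral_rpow_sub_one hq]
    _ ≤ ∫ z in a..c, z ^ (q - 1) * (1 - (1 - exp (-2 * z)) ^ p) :=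
        integral_mono_on hac
          ((intervalIntegral.intervalIntegrable_rpow' (by linarith)).const_mul _) (hint a c)
          fun z hz => le_rpow_mul_one_sub_rpow (ha.trans hz.1) hz.2 hp
    _ ≤ ∫ z in a..b, z ^ (q - 1) * (1 - (1 - exp (-2 * z)) ^ p) := by
        rw [← integral_add_adjacent_intervals (hint a c) (hint c b)]
        exact le_add_of_nonneg_right (integral_nonneg hcb
          fun z hz => rpow_mul_one_sub_rpow_nonneg (ha.trans (hac.trans hz.1)) hp)

end Integral

lemma exp_neg_two_mul_sub_log_mul (hb : 0 < b) :
    exp (-2 * (b - log b)) * (exp (2 * b) / 2) = b ^ 2 / 2 := by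
  rw [mul_div_assoc', ← exp_add, show -2 * (b - log b) + 2 * b = 2 * log b by ring,
    ← log_rpow hb, exp_log (rpow_pos_of_pos hb 2), rpow_two]

lemma tendsto_sub_log_div_self_rpow (q : ℝ) :
    Tendsto (fun b : ℝ => ((b - log b) / b) ^ q) atTop (𝓝 1) := by
  have hlog : Tendsto (fun b : ℝ => log b / b) atTop (𝓝 0) := by
    simpa using isLittleO_log_id_atTop.tendsto_div_nhds_zero
  have := ((tendsto_const_nhds (x := (1 : ℝ))).sub hlog).rpow_const (p := q) (Or.inl (by norm_num))
  rw [sub_zero, one_rpow] at this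
  refine this.congr' ?_
  filter_upwards [eventually_gt_atTop 0] with b hb
  rw [sub_div, div_self hb.ne']

theorem tendsto_integral_rpow_mul_one_sub_rpow_div {a q : ℝ} (ha : 0 ≤ a) (hq : 0 < q) :
    Tendsto (fun b : ℝ => (∫ z in a..b, z ^ (q - 1) * (1 - (1 - exp (-2 * z)) ^ (exp (2 * b) / 2)))
      / (b ^ q / q)) atTop (𝓝 1) := by
  have hsmall : Tendsto (fun b : ℝ => a ^ q / b ^ q) atTop (𝓝 0) :=
    tendsto_const_nhds.div_atTop (tendsto_rpow_atTop hq)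
  have hgauss : Tendsto (fun b : ℝ => 1 - exp (-(b ^ 2 / 2))) atTop (𝓝 1) := by
    simpa using tendsto_const_nhds.sub (tendsto_exp_neg_atTop_nhds_zero.comp
      ((tendsto_pow_atTop two_ne_zero).atTop_div_const two_pos))
  have hlower := hgauss.mul ((tendsto_sub_log_div_self_rpow q).sub hsmall)
  have hupper := (tendsto_const_nhds (x := (1 : ℝ))).sub hsmall
  rw [sub_zero, mul_one] at hlower
  rw [sub_zero] at hupper
  have hlog_le : ∀ᶠ b : ℝ in atTop, log b ≤ b / 2 := by
    filter_upwards [isLittleO_log_id_atTop.bound (by norm_num : (0 : ℝ) < 1 / 2),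
      eventually_gt_atTop 0] with b hb hb0
    simp only [norm_eq_abs, id] at hb
    linarith [le_abs_self (log b), abs_of_pos hb0]
  refine tendsto_of_tendsto_of_tendsto_of_le_of_le' hlower hupper ?_ ?_ <;>
    filter_upwards [hlog_le, eventually_ge_atTop (max 1 (2 * a))] with b hlogb hb
  all_goals
    have hb1 : 1 ≤ b := le_of_max_le_left hb
    have hb0 : 0 < b := by linarith
    have hbq : 0 < b ^ q / q := by positivity
  · have hc : 0 ≤ b - log b := by linarith [log_nonneg hb1]
    rw [le_div_iff₀ hbq, ← exp_neg_two_mul_sub_log_mul hb0, div_rpow hc hb0.le]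
    refine le_of_eq_of_le ?_ (le_integral_rpow_mul_one_sub_rpow (c := b - log b) hq
      (by positivity) ha (by linarith [le_of_max_le_right hb]) (by linarith [log_nonneg hb1]))
    field_simp
  · rw [div_le_iff₀ hbq]
    refine (integral_rpow_mul_one_sub_rpow_le hq (by positivity) ha
      (by linarith [le_of_max_le_right hb])).trans_eq ?_
    field_simp

/-- ∫_{log√2}^{log√N} z^{2/s-1}(1-(1-e^{-2z})^{N/2}) dz ~ (s/2)(log√N)^{2/s} as N → ∞. -/
theorem stmt_6 (s : ℝ) (hs : 0 < s) :
    Filter.Tendsto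
      (fun N : ℕ =>
        (∫ z in Real.log (Real.sqrt 2)..Real.log (Real.sqrt N),
            z ^ (2 / s - 1) * (1 - (1 - Real.exp (-2 * z)) ^ ((N : ℝ) / 2)))
          / (s / 2 * (Real.log (Real.sqrt N)) ^ (2 / s)))
      Filter.atTop (nhds 1) := by
  have hb : Tendsto (fun N : ℕ => log (sqrt N)) atTop atTop := by
    refine ((tendsto_log_atTop.comp tendsto_natCast_atTop_atTop).atTop_div_const two_pos).congr
      fun N => ?_
    rw [Function.comp_apply, log_sqrt N.cast_nonneg]
  refine ((tendsto_integral_rpow_mul_one_sub_rpow_div (log_nonneg (one_le_sqrt.mpr one_le_two))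
    (div_pos two_pos hs)).comp hb).congr' ?_
  filter_upwards [eventually_ge_atTop 1] with N hN
  have hN : (0 : ℝ) < N := by exact_mod_cast hN
  rw [Function.comp_apply, log_sqrt hN.le, mul_div_cancel₀ _ two_ne_zero, exp_log hN]
  congr 1
  field_simp
end

section
/- Let s = 2 and suppose λ_n ≍ log(2n + e) (i.e. there exist constants 0 < c ≤ C with c·log(2n+e) ≤ λ_n ≤ C·log(2n+e)). For k > 0 and t ≥ 0, the series ∑_{n≥2} (2n + 3/2 + e)^k · e^{-2tλ_n} / (n (log n)²) converges if 2tc ≥ k, and diverges if 2tC < k. -/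
open Real

/-! The weight `(2n + 3/2 + e)^k` is comparable to `(2n + e)^k`, and `λ_n ≍ log(2n + e)` turns
`e^{-2tλ_n}` into a power of `2n + e` lying between `(2n + e)^{-2tC}` and `(2n + e)^{-2tc}`.
If `2tc ≥ k` the numerator is therefore bounded and the series is dominated by the convergent
Bertrand series `∑ 1/(n log² n)` (Cauchy condensation). If `2tC < k` the numerator is at least
`n^ε` with `ε = k - 2tC > 0`, and since `log² n ≤ n^ε / (ε/2)²` the terms dominate a multiple
of the harmonic series. -/

lemma summable_inv_mul_log_pow {p : ℕ} (hp : 1 < p) :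
    Summable (fun n : ℕ => (((n : ℝ) + 2) * log ((n : ℝ) + 2) ^ p)⁻¹) := by
  have hlog_pos : ∀ n : ℕ, 0 < log ((n : ℝ) + 2) := fun n =>
    log_pos (by have : (0 : ℝ) ≤ n := n.cast_nonneg; linarith)
  have h_mono : ∀ ⦃m n : ℕ⦄, 0 < m → m ≤ n →
      (((n : ℝ) + 2) * log ((n : ℝ) + 2) ^ p)⁻¹ ≤ (((m : ℝ) + 2) * log ((m : ℝ) + 2) ^ p)⁻¹ := by
    intro m n _ hmn
    have := hlog_pos m
    gcongr
  rw [← summable_condensed_iff_of_nonneg (fun n => by have := hlog_pos n; positivity) h_mono,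
    ← summable_nat_add_iff 1]
  have hlog2 : 0 < log 2 := log_pos one_lt_two
  refine (((summable_nat_add_iff 1).mpr (summable_nat_pow_inv.mpr hp)).mul_left
    (log 2 ^ p)⁻¹).of_nonneg_of_le (fun k => by have := hlog_pos (2 ^ (k + 1)); positivity)
    fun k => ?_
  have hlog : ((k : ℝ) + 1) * log 2 ≤ log (2 ^ (k + 1) + 2) :=
    calc ((k : ℝ) + 1) * log 2 = log (2 ^ (k + 1)) := by rw [log_pow]; push_cast; ring
      _ ≤ log (2 ^ (k + 1) + 2) := log_le_log (by positivity) (by linarith)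
  calc (2 : ℝ) ^ (k + 1) *
        ((((2 ^ (k + 1) : ℕ) : ℝ) + 2) * log (((2 ^ (k + 1) : ℕ) : ℝ) + 2) ^ p)⁻¹
      ≤ 2 ^ (k + 1) * (2 ^ (k + 1) * (((k : ℝ) + 1) * log 2) ^ p)⁻¹ := by
        push_cast
        gcongr
        linarith
    _ = (log 2 ^ p)⁻¹ * ((((k + 1 : ℕ) : ℝ)) ^ p)⁻¹ := by
        push_cast
        rw [mul_pow]
        field_simp

lemma exp_neg_mul_le_rpow {y a b L : ℝ} (hy : 0 < y) (ha : 0 ≤ a) (h : b * log y ≤ L) :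
    exp (-(a * L)) ≤ y ^ (-(a * b)) := by
  rw [rpow_def_of_pos hy, exp_le_exp]
  nlinarith [mul_le_mul_of_nonneg_left h ha]

lemma rpow_le_exp_neg_mul {y a B L : ℝ} (hy : 0 < y) (ha : 0 ≤ a) (h : L ≤ B * log y) :
    y ^ (-(a * B)) ≤ exp (-(a * L)) := by
  rw [rpow_def_of_pos hy, exp_le_exp]
  nlinarith [mul_le_mul_of_nonneg_left h ha]

lemma rpow_mul_exp_neg_le_two_rpow {x k t c L : ℝ} (hx : 0 ≤ x) (ht : 0 ≤ t) (hk : 0 ≤ k)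
    (hkc : k ≤ 2 * t * c) (hL : c * log (2 * x + exp 1) ≤ L) :
    (2 * x + 3 / 2 + exp 1) ^ k * exp (-2 * t * L) ≤ 2 ^ k := by
  set y := 2 * x + exp 1 with hy_def
  have hy : 1 ≤ y := by linarith [add_one_le_exp 1]
  calc (2 * x + 3 / 2 + exp 1) ^ k * exp (-2 * t * L)
      ≤ (2 * y) ^ k * y ^ (-(2 * t * c)) := by
        gcongr
        · linarith [add_one_le_exp 1]
        · simpa only [neg_mul] using exp_neg_mul_le_rpow (by linarith) (by positivity) hL
    _ = 2 ^ k * y ^ (k - 2 * t * c) := by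
        rw [mul_rpow zero_le_two (by linarith), mul_assoc, ← rpow_add (by linarith),
          ← sub_eq_add_neg]
    _ ≤ 2 ^ k := mul_le_of_le_one_right (by positivity)
        (rpow_le_one_of_one_le_of_nonpos hy (by linarith))

lemma rpow_sub_le_rpow_mul_exp_neg {x k t C L : ℝ} (hx : 0 ≤ x) (ht : 0 ≤ t) (hk : 0 ≤ k)
    (hkC : 2 * t * C ≤ k) (hL : L ≤ C * log (2 * x + exp 1)) :
    x ^ (k - 2 * t * C) ≤ (2 * x + 3 / 2 + exp 1) ^ k * exp (-2 * t * L) := by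
  set y := 2 * x + exp 1 with hy_def
  have hy : 0 < y := by positivity
  calc x ^ (k - 2 * t * C) ≤ y ^ (k - 2 * t * C) := by
        gcongr
        linarith [exp_pos 1]
    _ = y ^ k * y ^ (-(2 * t * C)) := by rw [← rpow_add hy, ← sub_eq_add_neg]
    _ ≤ (2 * x + 3 / 2 + exp 1) ^ k * exp (-2 * t * L) := by
        gcongr
        · linarith
        · simpa only [neg_mul] using rpow_le_exp_neg_mul hy (by positivity) hL

lemma sq_div_mul_inv_le_rpow_div_mul_log_sq {x ε : ℝ} (hx : 1 < x) (hε : 0 < ε) :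
    (ε / 2) ^ 2 * x⁻¹ ≤ x ^ ε / (x * log x ^ 2) := by
  have hlog : 0 < log x := log_pos hx
  have hlog_le : (ε / 2) * log x ≤ x ^ (ε / 2) := by
    have := log_le_rpow_div (by linarith) (half_pos hε) (x := x)
    rwa [le_div_iff₀ (half_pos hε), mul_comm] at this
  rw [le_div_iff₀ (by positivity)]
  calc (ε / 2) ^ 2 * x⁻¹ * (x * log x ^ 2) = ((ε / 2) * log x) ^ 2 := by
        field_simp
    _ ≤ (x ^ (ε / 2)) ^ 2 := by gcongr
    _ = x ^ ε := by rw [← rpow_natCast, ← rpow_mul (by linarith)]; norm_num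

lemma not_summable_of_mul_inv_add_two_le {f : ℕ → ℝ} {δ : ℝ} (hδ : 0 < δ)
    (h : ∀ n : ℕ, δ * ((n : ℝ) + 2)⁻¹ ≤ f n) : ¬ Summable f := by
  intro hf
  have hshift : Summable (fun n : ℕ => ((n : ℝ) + 2)⁻¹) :=
    ((hf.of_nonneg_of_le (fun n => by positivity) h).mul_left δ⁻¹).congr
      fun n => by field_simp
  refine not_summable_natCast_inv ((summable_nat_add_iff 2).mp ?_)
  simpa using hshift

theorem stmt_11_general (lam : ℕ → ℝ) (c C : ℝ)
    (hlam : ∀ n : ℕ, 2 ≤ n →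
      c * Real.log (2 * n + Real.exp 1) ≤ lam n ∧
      lam n ≤ C * Real.log (2 * n + Real.exp 1))
    (k t : ℝ) (hk : 0 < k) (ht : 0 ≤ t) :
    (k ≤ 2 * t * c →
      Summable (fun n : ℕ =>
        (2 * (n + 2 : ℝ) + 3 / 2 + Real.exp 1) ^ k * Real.exp (-2 * t * lam (n + 2))
          / ((n + 2 : ℝ) * (Real.log (n + 2)) ^ 2))) ∧
    (2 * t * C < k →
      ¬ Summable (fun n : ℕ =>
        (2 * (n + 2 : ℝ) + 3 / 2 + Real.exp 1) ^ k * Real.exp (-2 * t * lam (n + 2))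
          / ((n + 2 : ℝ) * (Real.log (n + 2)) ^ 2))) := by
  have hlam_shift : ∀ n : ℕ, c * log (2 * ((n : ℝ) + 2) + exp 1) ≤ lam (n + 2) ∧
      lam (n + 2) ≤ C * log (2 * ((n : ℝ) + 2) + exp 1) := fun n => by
    simpa using hlam (n + 2) (by omega)
  constructor
  · intro hkc
    refine ((summable_inv_mul_log_pow one_lt_two).mul_left (2 ^ k)).of_nonneg_of_le
      (fun n => by positivity) fun n => ?_
    rw [div_eq_mul_inv]
    gcongr
    exact rpow_mul_exp_neg_le_two_rpow (by positivity) ht hk.le hkc (hlam_shift n).1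
  · intro hkC
    refine not_summable_of_mul_inv_add_two_le (pow_pos (half_pos (sub_pos.2 hkC)) 2) fun n => ?_
    have hx : (1 : ℝ) < n + 2 := by have : (0 : ℝ) ≤ n := n.cast_nonneg; linarith
    calc _ ≤ ((n : ℝ) + 2) ^ (k - 2 * t * C) / ((n + 2) * log (n + 2) ^ 2) :=
          sq_div_mul_inv_le_rpow_div_mul_log_sq hx (sub_pos.2 hkC)
      _ ≤ _ := by
          gcongr
          exact rpow_sub_le_rpow_mul_exp_neg (by positivity) ht hk.le hkC.le (hlam_shift n).2

/-- delayed Sobolev regularization at s = 2. With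
λ_n ≍ log(2n+e), the series ∑_{n≥2} (2n+3/2+e)^k e^{-2tλ_n}/(n (log n)²)
converges if 2tc ≥ k and diverges if 2tC < k. -/
theorem stmt_11 (lam : ℕ → ℝ) (c C : ℝ) (hc : 0 < c) (hcC : c ≤ C)
    (hlam : ∀ n : ℕ, 2 ≤ n →
      c * Real.log (2 * n + Real.exp 1) ≤ lam n ∧
      lam n ≤ C * Real.log (2 * n + Real.exp 1))
    (k t : ℝ) (hk : 0 < k) (ht : 0 ≤ t) :
    (k ≤ 2 * t * c →
      Summable (fun n : ℕ =>
        (2 * (n + 2 : ℝ) + 3 / 2 + Real.exp 1) ^ k * Real.exp (-2 * t * lam (n + 2))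
          / ((n + 2 : ℝ) * (Real.log (n + 2)) ^ 2))) ∧
    (2 * t * C < k →
      ¬ Summable (fun n : ℕ =>
        (2 * (n + 2 : ℝ) + 3 / 2 + Real.exp 1) ^ k * Real.exp (-2 * t * lam (n + 2))
          / ((n + 2 : ℝ) * (Real.log (n + 2)) ^ 2))) :=
  stmt_11_general lam c C hlam k t hk ht
end
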